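/- Let K = ℚ(a) where a¹¹ − 2a¹⁰ − 3a⁹ + 9a⁸ − a⁷ − 13a⁶ + 9a⁵ + 7a⁴ − 5a³ − 1 = 0. Set b = −9a¹⁰ + 38a⁹ − 35a⁸ − 59a⁷ + 131a⁶ − 45a⁵ − 81a⁴ + 59a³ + 6a² + 2a + 14 and c = 3a⁹ − 7a⁸ − 3a⁷ + 18a⁶ − 9a⁵ − 13a⁴ + 10a³ + 9a² + 2a. Then the point (0,0) on the elliptic curve y² + (1−c)xy − by = x³ − bx² over K has order exactly 31. -/

import Mathlib

open WeierstrassCurve.Affine WeierstrassCurve.Affine.Point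

private def W31 (K : Type) [Field K] (a : K) : WeierstrassCurve.Affine K :=
  ({ a₁ := 1 - (3*a^9 - 7*a^8 - 3*a^7 + 18*a^6 - 9*a^5 - 13*a^4 + 10*a^3 + 9*a^2 + 2*a),
     a₂ := -(-9*a^10 + 38*a^9 - 35*a^8 - 59*a^7 + 131*a^6 - 45*a^5 - 81*a^4 + 59*a^3 + 6*a^2 + 2*a + 14),
     a₃ := -(-9*a^10 + 38*a^9 - 35*a^8 - 59*a^7 + 131*a^6 - 45*a^5 - 81*a^4 + 59*a^3 + 6*a^2 + 2*a + 14),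
     a₄ := 0, a₆ := 0 } : WeierstrassCurve K).toAffine

private lemma W31_a1 (K : Type) [Field K] (a : K) : (W31 K a).a₁ = 1 - (3*a^9 - 7*a^8 - 3*a^7 + 18*a^6 - 9*a^5 - 13*a^4 + 10*a^3 + 9*a^2 + 2*a) := rfl
private lemma W31_a2 (K : Type) [Field K] (a : K) : (W31 K a).a₂ = -(-9*a^10 + 38*a^9 - 35*a^8 - 59*a^7 + 131*a^6 - 45*a^5 - 81*a^4 + 59*a^3 + 6*a^2 + 2*a + 14) := rfl
private lemma W31_a3 (K : Type) [Field K] (a : K) : (W31 K a).a₃ = -(-9*a^10 + 38*a^9 - 35*a^8 - 59*a^7 + 131*a^6 - 45*a^5 - 81*a^4 + 59*a^3 + 6*a^2 + 2*a + 14) := rfl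
private lemma W31_a4 (K : Type) [Field K] (a : K) : (W31 K a).a₄ = 0 := rfl
private lemma W31_a6 (K : Type) [Field K] (a : K) : (W31 K a).a₆ = 0 := rfl

private lemma some_congr' {K : Type} [Field K] {W : WeierstrassCurve.Affine K} {x₁ y₁ x₂ y₂ : K}
    (hx : x₁ = x₂) (hy : y₁ = y₂) (h₁ : W.Nonsingular x₁ y₁) (h₂ : W.Nonsingular x₂ y₂) :
    Point.some _ _ h₁ = Point.some _ _ h₂ := by subst hx; subst hy; rfl

open Classical in
set_option maxHeartbeats 4000000 in
private theorem aux31 (K : Type) [Field K] [CharZero K] (a : K)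
    (hpoly : a^11 - 2*a^10 - 3*a^9 + 9*a^8 - a^7 - 13*a^6 + 9*a^5 + 7*a^4 - 5*a^3 - 1 = 0) :
    ∃ h : (W31 K a).Nonsingular 0 0, addOrderOf (Point.some _ _ h) = 31 := by

  -- point 0
  have hns0 : (W31 K a).Nonsingular (0 : K) (0 : K) := by
    rw [nonsingular_iff, equation_iff]
    refine ⟨?_, Or.inr fun h => one_ne_zero (α := K) ?_⟩
    · rw [W31_a1, W31_a2, W31_a3, W31_a4, W31_a6]
      linear_combination (0 : K) * hpoly
    · rw [W31_a1, W31_a3] at h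
      linear_combination ((-6) + (9)*a + (-11)*a^2 + (-16)*a^3 + (71)*a^4 + (-54)*a^5 + (-17)*a^6 + (42)*a^7 + (-13)*a^8 + (-6)*a^9 + (3)*a^10) * h + ((83) + (-114)*a + (172)*a^2 + (131)*a^3 + (-762)*a^4 + (907)*a^5 + (-392)*a^6 + (-69)*a^7 + (114)*a^8 + (-27)*a^9) * hpoly
  -- point 1
  have hns1 : (W31 K a).Nonsingular ((14) + (2)*a + (6)*a^2 + (59)*a^3 + (-81)*a^4 + (-45)*a^5 + (131)*a^6 + (-59)*a^7 + (-35)*a^8 + (38)*a^9 + (-9)*a^10) ((-139) + (149)*a + (-12)*a^2 + (-540)*a^3 + (1685)*a^4 + (17)*a^5 + (-2229)*a^6 + (1645)*a^7 + (322)*a^8 + (-838)*a^9 + (265)*a^10) := by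
    rw [nonsingular_iff, equation_iff]
    refine ⟨?_, Or.inr fun h => one_ne_zero (α := K) ?_⟩
    · rw [W31_a1, W31_a2, W31_a3, W31_a4, W31_a6]
      linear_combination ((-19321) + (37530)*a + (-39435)*a^2 + (-54535)*a^3 + (313569)*a^4 + (-286441)*a^5 + (-111289)*a^6 + (622753)*a^7 + (-633383)*a^8 + (-125609)*a^9 + (791774)*a^10 + (-422054)*a^11 + (-437431)*a^12 + (639530)*a^13 + (-192037)*a^14 + (-157383)*a^15 + (159203)*a^16 + (-55221)*a^17 + (7155)*a^18) * hpoly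
    · rw [W31_a1, W31_a3] at h
      linear_combination ((-240) + (326)*a + (-437)*a^2 + (-612)*a^3 + (2520)*a^4 + (-1251)*a^5 + (-1468)*a^6 + (1751)*a^7 + (-173)*a^8 + (-495)*a^9 + (180)*a^10) * h + ((66719) + (-155428)*a + (246466)*a^2 + (-31653)*a^3 + (-768229)*a^4 + (1102501)*a^5 + (-430556)*a^6 + (-645310)*a^7 + (990843)*a^8 + (-184882)*a^9 + (-801113)*a^10 + (747397)*a^11 + (86489)*a^12 + (-518889)*a^13 + (280666)*a^14 + (28329)*a^15 + (-88434)*a^16 + (35505)*a^17 + (-4860)*a^18) * hpoly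
  -- point 2
  have hns2 : (W31 K a).Nonsingular ((-5) + (7)*a + (-1)*a^2 + (-25)*a^3 + (56)*a^4 + (6)*a^5 + (-74)*a^6 + (50)*a^7 + (12)*a^8 + (-26)*a^9 + (8)*a^10) ((180) + (-114)*a + (96)*a^2 + (865)*a^3 + (-1760)*a^4 + (-391)*a^5 + (2481)*a^6 + (-1500)*a^7 + (-493)*a^8 + (828)*a^9 + (-236)*a^10) := by
    rw [nonsingular_iff, equation_iff]
    refine ⟨?_, Or.inr fun h => one_ne_zero (α := K) ?_⟩
    · rw [W31_a1, W31_a2, W31_a3, W31_a4, W31_a6]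
      linear_combination ((-29455) + (37629)*a + (-49988)*a^2 + (-113205)*a^3 + (384088)*a^4 + (-237841)*a^5 + (-234311)*a^6 + (630312)*a^7 + (-571192)*a^8 + (-59507)*a^9 + (677416)*a^10 + (-493550)*a^11 + (-243344)*a^12 + (568492)*a^13 + (-271378)*a^14 + (-78830)*a^15 + (147792)*a^16 + (-69836)*a^17 + (14656)*a^18 + (-1088)*a^19) * hpoly
    · rw [W31_a1, W31_a3] at h
      linear_combination ((-1639) + (2325)*a + (-3293)*a^2 + (-3533)*a^3 + (16499)*a^4 + (-8656)*a^5 + (-9089)*a^6 + (11319)*a^7 + (-1289)*a^8 + (-3123)*a^9 + (1157)*a^10) * h + ((-558900) + (1141932)*a + (-1972162)*a^2 + (113591)*a^3 + (5516116)*a^4 + (-6909989)*a^5 + (2195335)*a^6 + (3199824)*a^7 + (-4680194)*a^8 + (1803496)*a^9 + (2418059)*a^10 + (-3390161)*a^11 + (524206)*a^12 + (1823620)*a^13 + (-1393030)*a^14 + (91262)*a^15 + (346400)*a^16 + (-174454)*a^17 + (27768)*a^18) * hpoly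
  -- point 3
  have hns3 : (W31 K a).Nonsingular ((18) + (-23)*a + (43)*a^2 + (32)*a^3 + (-189)*a^4 + (106)*a^5 + (100)*a^6 + (-130)*a^7 + (16)*a^8 + (35)*a^9 + (-13)*a^10) ((35) + (-42)*a + (38)*a^2 + (131)*a^3 + (-328)*a^4 + (42)*a^5 + (318)*a^6 + (-244)*a^7 + (-33)*a^8 + (104)*a^9 + (-32)*a^10) := by
    rw [nonsingular_iff, equation_iff]
    refine ⟨?_, Or.inr fun h => one_ne_zero (α := K) ?_⟩
    · rw [W31_a1, W31_a2, W31_a3, W31_a4, W31_a6]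
      linear_combination ((-69) + (-6169)*a + (36623)*a^2 + (-98760)*a^3 + (134055)*a^4 + (6924)*a^5 + (-402135)*a^6 + (683675)*a^7 + (-300648)*a^8 + (-484633)*a^9 + (740095)*a^10 + (-241384)*a^11 + (-266429)*a^12 + (276404)*a^13 + (-48856)*a^14 + (-57326)*a^15 + (33308)*a^16 + (-1815)*a^17 + (-3029)*a^18 + (676)*a^19) * hpoly
    · rw [W31_a1, W31_a3] at h
      linear_combination ((839) + (-1169)*a + (1627)*a^2 + (1924)*a^3 + (-8545)*a^4 + (4347)*a^5 + (4822)*a^6 + (-5841)*a^7 + (617)*a^8 + (1627)*a^9 + (-597)*a^10) * h + ((62085) + (-208161)*a + (287386)*a^2 + (-252793)*a^3 + (-276624)*a^4 + (180872)*a^5 + (1258784)*a^6 + (-534658)*a^7 + (-3111158)*a^8 + (3785083)*a^9 + (708055)*a^10 + (-4001142)*a^11 + (2138505)*a^12 + (925513)*a^13 + (-1406548)*a^14 + (364910)*a^15 + (191206)*a^16 + (-133899)*a^17 + (23283)*a^18) * hpoly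
  -- point 4
  have hns4 : (W31 K a).Nonsingular ((9) + (-12)*a + (7)*a^2 + (45)*a^3 + (-68)*a^4 + (-8)*a^5 + (71)*a^6 + (-41)*a^7 + (-12)*a^8 + (19)*a^9 + (-5)*a^10) ((27) + (-5)*a + (34)*a^2 + (161)*a^3 + (-206)*a^4 + (-116)*a^5 + (312)*a^6 + (-126)*a^7 + (-87)*a^8 + (83)*a^9 + (-18)*a^10) := by
    rw [nonsingular_iff, equation_iff]
    refine ⟨?_, Or.inr fun h => one_ne_zero (α := K) ?_⟩
    · rw [W31_a1, W31_a2, W31_a3, W31_a4, W31_a6]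
      linear_combination ((-999) + (1055)*a + (1416)*a^2 + (-9816)*a^3 + (9301)*a^4 + (15449)*a^5 + (-27013)*a^6 + (-154)*a^7 + (20470)*a^8 + (-3773)*a^9 + (-9289)*a^10 + (-4639)*a^11 + (12892)*a^12 + (-478)*a^13 + (-9537)*a^14 + (5646)*a^15 + (769)*a^16 + (-1978)*a^17 + (765)*a^18 + (-100)*a^19) * hpoly
    · rw [W31_a1, W31_a3] at h
      linear_combination ((724) + (-1008)*a + (1417)*a^2 + (1657)*a^3 + (-7365)*a^4 + (3798)*a^5 + (4083)*a^6 + (-5117)*a^7 + (605)*a^8 + (1429)*a^9 + (-535)*a^10) * h + ((35475) + (-79800)*a + (120457)*a^2 + (58096)*a^3 + (-308706)*a^4 + (-7586)*a^5 + (417628)*a^6 + (326613)*a^7 + (-1330130)*a^8 + (576906)*a^9 + (1185340)*a^10 + (-1457582)*a^11 + (163179)*a^12 + (724286)*a^13 + (-496134)*a^14 + (15115)*a^15 + (119648)*a^16 + (-54605)*a^17 + (8025)*a^18) * hpoly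
  -- doubling step 0
  have hy0 : (0 : K) ≠ (W31 K a).negY (0 : K) (0 : K) := fun h => one_ne_zero (α := K) (by
    simp only [negY, W31_a1, W31_a3] at h
    linear_combination ((-6) + (9)*a + (-11)*a^2 + (-16)*a^3 + (71)*a^4 + (-54)*a^5 + (-17)*a^6 + (42)*a^7 + (-13)*a^8 + (-6)*a^9 + (3)*a^10) * h + ((83) + (-114)*a + (172)*a^2 + (131)*a^3 + (-762)*a^4 + (907)*a^5 + (-392)*a^6 + (-69)*a^7 + (114)*a^8 + (-27)*a^9) * hpoly)
  have hd0 : (0 : K) - (W31 K a).negY (0 : K) (0 : K) ≠ 0 := fun h => one_ne_zero (α := K) (by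
    simp only [negY, W31_a1, W31_a3] at h
    linear_combination ((-6) + (9)*a + (-11)*a^2 + (-16)*a^3 + (71)*a^4 + (-54)*a^5 + (-17)*a^6 + (42)*a^7 + (-13)*a^8 + (-6)*a^9 + (3)*a^10) * h + ((83) + (-114)*a + (172)*a^2 + (131)*a^3 + (-762)*a^4 + (907)*a^5 + (-392)*a^6 + (-69)*a^7 + (114)*a^8 + (-27)*a^9) * hpoly)
  have hL0 : (W31 K a).slope (0 : K) (0 : K) (0 : K) (0 : K) = (0 : K) := by
    rw [slope_of_Y_ne rfl hy0, div_eq_iff hd0]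
    simp only [negY]
    rw [W31_a1, W31_a2, W31_a3, W31_a4]
    linear_combination (0 : K) * hpoly
  have hX0 : (W31 K a).addX (0 : K) (0 : K) (0 : K) = ((14) + (2)*a + (6)*a^2 + (59)*a^3 + (-81)*a^4 + (-45)*a^5 + (131)*a^6 + (-59)*a^7 + (-35)*a^8 + (38)*a^9 + (-9)*a^10) := by
    simp only [addX]
    rw [W31_a1, W31_a2]
    linear_combination (0 : K) * hpoly
  have hXs0 : (W31 K a).addX (0 : K) (0 : K) ((W31 K a).slope (0 : K) (0 : K) (0 : K) (0 : K)) = ((14) + (2)*a + (6)*a^2 + (59)*a^3 + (-81)*a^4 + (-45)*a^5 + (131)*a^6 + (-59)*a^7 + (-35)*a^8 + (38)*a^9 + (-9)*a^10) := by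
    rw [hL0]; exact hX0
  have hYs0 : (W31 K a).addY (0 : K) (0 : K) (0 : K) ((W31 K a).slope (0 : K) (0 : K) (0 : K) (0 : K)) = ((-139) + (149)*a + (-12)*a^2 + (-540)*a^3 + (1685)*a^4 + (17)*a^5 + (-2229)*a^6 + (1645)*a^7 + (322)*a^8 + (-838)*a^9 + (265)*a^10) := by
    simp only [addY, negAddY, negY, hL0, hX0]
    rw [W31_a1, W31_a3]
    linear_combination ((-139) + (121)*a + (-142)*a^2 + (-15)*a^3 + (97)*a^4 + (46)*a^5 + (-179)*a^6 + (123)*a^7 + (-27)*a^8) * hpoly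
  have hs0 : Point.some _ _ hns0 + Point.some _ _ hns0 = Point.some _ _ hns1 :=
    (WeierstrassCurve.Affine.Point.add_self_of_Y_ne (h₁ := hns0) hy0).trans
      (some_congr' hXs0 hYs0 _ hns1)
  -- doubling step 1
  have hy1 : ((-139) + (149)*a + (-12)*a^2 + (-540)*a^3 + (1685)*a^4 + (17)*a^5 + (-2229)*a^6 + (1645)*a^7 + (322)*a^8 + (-838)*a^9 + (265)*a^10) ≠ (W31 K a).negY ((14) + (2)*a + (6)*a^2 + (59)*a^3 + (-81)*a^4 + (-45)*a^5 + (131)*a^6 + (-59)*a^7 + (-35)*a^8 + (38)*a^9 + (-9)*a^10) ((-139) + (149)*a + (-12)*a^2 + (-540)*a^3 + (1685)*a^4 + (17)*a^5 + (-2229)*a^6 + (1645)*a^7 + (322)*a^8 + (-838)*a^9 + (265)*a^10) := fun h => one_ne_zero (α := K) (by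
    simp only [negY, W31_a1, W31_a3] at h
    linear_combination ((-240) + (326)*a + (-437)*a^2 + (-612)*a^3 + (2520)*a^4 + (-1251)*a^5 + (-1468)*a^6 + (1751)*a^7 + (-173)*a^8 + (-495)*a^9 + (180)*a^10) * h + ((66719) + (-155428)*a + (246466)*a^2 + (-31653)*a^3 + (-768229)*a^4 + (1102501)*a^5 + (-430556)*a^6 + (-645310)*a^7 + (990843)*a^8 + (-184882)*a^9 + (-801113)*a^10 + (747397)*a^11 + (86489)*a^12 + (-518889)*a^13 + (280666)*a^14 + (28329)*a^15 + (-88434)*a^16 + (35505)*a^17 + (-4860)*a^18) * hpoly)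
  have hd1 : ((-139) + (149)*a + (-12)*a^2 + (-540)*a^3 + (1685)*a^4 + (17)*a^5 + (-2229)*a^6 + (1645)*a^7 + (322)*a^8 + (-838)*a^9 + (265)*a^10) - (W31 K a).negY ((14) + (2)*a + (6)*a^2 + (59)*a^3 + (-81)*a^4 + (-45)*a^5 + (131)*a^6 + (-59)*a^7 + (-35)*a^8 + (38)*a^9 + (-9)*a^10) ((-139) + (149)*a + (-12)*a^2 + (-540)*a^3 + (1685)*a^4 + (17)*a^5 + (-2229)*a^6 + (1645)*a^7 + (322)*a^8 + (-838)*a^9 + (265)*a^10) ≠ 0 := fun h => one_ne_zero (α := K) (by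
    simp only [negY, W31_a1, W31_a3] at h
    linear_combination ((-240) + (326)*a + (-437)*a^2 + (-612)*a^3 + (2520)*a^4 + (-1251)*a^5 + (-1468)*a^6 + (1751)*a^7 + (-173)*a^8 + (-495)*a^9 + (180)*a^10) * h + ((66719) + (-155428)*a + (246466)*a^2 + (-31653)*a^3 + (-768229)*a^4 + (1102501)*a^5 + (-430556)*a^6 + (-645310)*a^7 + (990843)*a^8 + (-184882)*a^9 + (-801113)*a^10 + (747397)*a^11 + (86489)*a^12 + (-518889)*a^13 + (280666)*a^14 + (28329)*a^15 + (-88434)*a^16 + (35505)*a^17 + (-4860)*a^18) * hpoly)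
  have hL1 : (W31 K a).slope ((14) + (2)*a + (6)*a^2 + (59)*a^3 + (-81)*a^4 + (-45)*a^5 + (131)*a^6 + (-59)*a^7 + (-35)*a^8 + (38)*a^9 + (-9)*a^10) ((14) + (2)*a + (6)*a^2 + (59)*a^3 + (-81)*a^4 + (-45)*a^5 + (131)*a^6 + (-59)*a^7 + (-35)*a^8 + (38)*a^9 + (-9)*a^10) ((-139) + (149)*a + (-12)*a^2 + (-540)*a^3 + (1685)*a^4 + (17)*a^5 + (-2229)*a^6 + (1645)*a^7 + (322)*a^8 + (-838)*a^9 + (265)*a^10) ((-139) + (149)*a + (-12)*a^2 + (-540)*a^3 + (1685)*a^4 + (17)*a^5 + (-2229)*a^6 + (1645)*a^7 + (322)*a^8 + (-838)*a^9 + (265)*a^10) = ((-2) + (3)*a + (8)*a^2 + (11)*a^3 + (2)*a^4 + (-20)*a^5 + (8)*a^6 + (12)*a^7 + (-9)*a^8 + (-2)*a^9 + (2)*a^10) := by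
    rw [slope_of_Y_ne rfl hy1, div_eq_iff hd1]
    simp only [negY]
    rw [W31_a1, W31_a2, W31_a3, W31_a4]
    linear_combination ((221) + (-1003)*a + (-337)*a^2 + (-2108)*a^3 + (-1154)*a^4 + (4814)*a^5 + (-4818)*a^6 + (2023)*a^7 + (2977)*a^8 + (-5998)*a^9 + (1213)*a^10 + (5722)*a^11 + (-4521)*a^12 + (-1262)*a^13 + (2973)*a^14 + (-981)*a^15 + (-361)*a^16 + (300)*a^17 + (-54)*a^18) * hpoly
  have hX1 : (W31 K a).addX ((14) + (2)*a + (6)*a^2 + (59)*a^3 + (-81)*a^4 + (-45)*a^5 + (131)*a^6 + (-59)*a^7 + (-35)*a^8 + (38)*a^9 + (-9)*a^10) ((14) + (2)*a + (6)*a^2 + (59)*a^3 + (-81)*a^4 + (-45)*a^5 + (131)*a^6 + (-59)*a^7 + (-35)*a^8 + (38)*a^9 + (-9)*a^10) ((-2) + (3)*a + (8)*a^2 + (11)*a^3 + (2)*a^4 + (-20)*a^5 + (8)*a^6 + (12)*a^7 + (-9)*a^8 + (-2)*a^9 + (2)*a^10) = ((-5) + (7)*a + (-1)*a^2 + (-25)*a^3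 + (56)*a^4 + (6)*a^5 + (-74)*a^6 + (50)*a^7 + (12)*a^8 + (-26)*a^9 + (8)*a^10) := by
    simp only [addX]
    rw [W31_a1, W31_a2]
    linear_combination ((7) + (14)*a + (8)*a^2 + (7)*a^3 + (-20)*a^4 + (-4)*a^5 + (25)*a^6 + (-12)*a^7 + (-6)*a^8 + (4)*a^9) * hpoly
  have hXs1 : (W31 K a).addX ((14) + (2)*a + (6)*a^2 + (59)*a^3 + (-81)*a^4 + (-45)*a^5 + (131)*a^6 + (-59)*a^7 + (-35)*a^8 + (38)*a^9 + (-9)*a^10) ((14) + (2)*a + (6)*a^2 + (59)*a^3 + (-81)*a^4 + (-45)*a^5 + (131)*a^6 + (-59)*a^7 + (-35)*a^8 + (38)*a^9 + (-9)*a^10) ((W31 K a).slope ((14) + (2)*a + (6)*a^2 + (59)*a^3 + (-81)*a^4 + (-45)*a^5 + (131)*a^6 + (-59)*a^7 + (-35)*a^8 + (38)*a^9 + (-9)*a^10) ((14) + (2)*a + (6)*a^2 + (59)*a^3 + (-81)*a^4 + (-45)*a^5 + (131)*a^6 + (-59)*a^7 + (-35)*a^8 + (38)*a^9 + (-9)*a^10)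 ((-139) + (149)*a + (-12)*a^2 + (-540)*a^3 + (1685)*a^4 + (17)*a^5 + (-2229)*a^6 + (1645)*a^7 + (322)*a^8 + (-838)*a^9 + (265)*a^10) ((-139) + (149)*a + (-12)*a^2 + (-540)*a^3 + (1685)*a^4 + (17)*a^5 + (-2229)*a^6 + (1645)*a^7 + (322)*a^8 + (-838)*a^9 + (265)*a^10)) = ((-5) + (7)*a + (-1)*a^2 + (-25)*a^3 + (56)*a^4 + (6)*a^5 + (-74)*a^6 + (50)*a^7 + (12)*a^8 + (-26)*a^9 + (8)*a^10) := by
    rw [hL1]; exact hX1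
  have hYs1 : (W31 K a).addY ((14) + (2)*a + (6)*a^2 + (59)*a^3 + (-81)*a^4 + (-45)*a^5 + (131)*a^6 + (-59)*a^7 + (-35)*a^8 + (38)*a^9 + (-9)*a^10) ((14) + (2)*a + (6)*a^2 + (59)*a^3 + (-81)*a^4 + (-45)*a^5 + (131)*a^6 + (-59)*a^7 + (-35)*a^8 + (38)*a^9 + (-9)*a^10) ((-139) + (149)*a + (-12)*a^2 + (-540)*a^3 + (1685)*a^4 + (17)*a^5 + (-2229)*a^6 + (1645)*a^7 + (322)*a^8 + (-838)*a^9 + (265)*a^10) ((W31 K a).slope ((14) + (2)*a + (6)*a^2 + (59)*a^3 + (-81)*a^4 + (-45)*a^5 + (131)*a^6 + (-59)*a^7 + (-35)*a^8 + (38)*a^9 + (-9)*a^10) ((14) + (2)*a + (6)*a^2 + (59)*a^3 + (-81)*a^4 + (-45)*a^5 + (131)*a^6 + (-59)*a^7 + (-35)*a^8 + (38)*a^9 + (-9)*a^10) ((-139) + (149)*a + (-12)*a^2 + (-540)*a^3 + (1685)*a^4 + (17)*a^5 + (-2229)*a^6 + (1645)*a^7 + (322)*a^8 + (-838)*a^9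 + (265)*a^10) ((-139) + (149)*a + (-12)*a^2 + (-540)*a^3 + (1685)*a^4 + (17)*a^5 + (-2229)*a^6 + (1645)*a^7 + (322)*a^8 + (-838)*a^9 + (265)*a^10)) = ((180) + (-114)*a + (96)*a^2 + (865)*a^3 + (-1760)*a^4 + (-391)*a^5 + (2481)*a^6 + (-1500)*a^7 + (-493)*a^8 + (828)*a^9 + (-236)*a^10) := by
    simp only [addY, negAddY, negY, hL1, hX1]
    rw [W31_a1, W31_a3]
    linear_combination ((60) + (-17)*a + (-15)*a^2 + (-92)*a^3 + (-74)*a^4 + (292)*a^5 + (-188)*a^6 + (-69)*a^7 + (118)*a^8 + (-34)*a^9) * hpoly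
  have hs1 : Point.some _ _ hns1 + Point.some _ _ hns1 = Point.some _ _ hns2 :=
    (WeierstrassCurve.Affine.Point.add_self_of_Y_ne (h₁ := hns1) hy1).trans
      (some_congr' hXs1 hYs1 _ hns2)
  -- doubling step 2
  have hy2 : ((180) + (-114)*a + (96)*a^2 + (865)*a^3 + (-1760)*a^4 + (-391)*a^5 + (2481)*a^6 + (-1500)*a^7 + (-493)*a^8 + (828)*a^9 + (-236)*a^10) ≠ (W31 K a).negY ((-5) + (7)*a + (-1)*a^2 + (-25)*a^3 + (56)*a^4 + (6)*a^5 + (-74)*a^6 + (50)*a^7 + (12)*a^8 + (-26)*a^9 + (8)*a^10) ((180) + (-114)*a + (96)*a^2 + (865)*a^3 + (-1760)*a^4 + (-391)*a^5 + (2481)*a^6 + (-1500)*a^7 + (-493)*a^8 + (828)*a^9 + (-236)*a^10) := fun h => one_ne_zero (α := K) (by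
    simp only [negY, W31_a1, W31_a3] at h
    linear_combination ((-1639) + (2325)*a + (-3293)*a^2 + (-3533)*a^3 + (16499)*a^4 + (-8656)*a^5 + (-9089)*a^6 + (11319)*a^7 + (-1289)*a^8 + (-3123)*a^9 + (1157)*a^10) * h + ((-558900) + (1141932)*a + (-1972162)*a^2 + (113591)*a^3 + (5516116)*a^4 + (-6909989)*a^5 + (2195335)*a^6 + (3199824)*a^7 + (-4680194)*a^8 + (1803496)*a^9 + (2418059)*a^10 + (-3390161)*a^11 + (524206)*a^12 + (1823620)*a^13 + (-1393030)*a^14 + (91262)*a^15 + (346400)*a^16 + (-174454)*a^17 + (27768)*a^18) * hpoly)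
  have hd2 : ((180) + (-114)*a + (96)*a^2 + (865)*a^3 + (-1760)*a^4 + (-391)*a^5 + (2481)*a^6 + (-1500)*a^7 + (-493)*a^8 + (828)*a^9 + (-236)*a^10) - (W31 K a).negY ((-5) + (7)*a + (-1)*a^2 + (-25)*a^3 + (56)*a^4 + (6)*a^5 + (-74)*a^6 + (50)*a^7 + (12)*a^8 + (-26)*a^9 + (8)*a^10) ((180) + (-114)*a + (96)*a^2 + (865)*a^3 + (-1760)*a^4 + (-391)*a^5 + (2481)*a^6 + (-1500)*a^7 + (-493)*a^8 + (828)*a^9 + (-236)*a^10) ≠ 0 := fun h => one_ne_zero (α := K) (by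
    simp only [negY, W31_a1, W31_a3] at h
    linear_combination ((-1639) + (2325)*a + (-3293)*a^2 + (-3533)*a^3 + (16499)*a^4 + (-8656)*a^5 + (-9089)*a^6 + (11319)*a^7 + (-1289)*a^8 + (-3123)*a^9 + (1157)*a^10) * h + ((-558900) + (1141932)*a + (-1972162)*a^2 + (113591)*a^3 + (5516116)*a^4 + (-6909989)*a^5 + (2195335)*a^6 + (3199824)*a^7 + (-4680194)*a^8 + (1803496)*a^9 + (2418059)*a^10 + (-3390161)*a^11 + (524206)*a^12 + (1823620)*a^13 + (-1393030)*a^14 + (91262)*a^15 + (346400)*a^16 + (-174454)*a^17 + (27768)*a^18) * hpoly)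
  have hL2 : (W31 K a).slope ((-5) + (7)*a + (-1)*a^2 + (-25)*a^3 + (56)*a^4 + (6)*a^5 + (-74)*a^6 + (50)*a^7 + (12)*a^8 + (-26)*a^9 + (8)*a^10) ((-5) + (7)*a + (-1)*a^2 + (-25)*a^3 + (56)*a^4 + (6)*a^5 + (-74)*a^6 + (50)*a^7 + (12)*a^8 + (-26)*a^9 + (8)*a^10) ((180) + (-114)*a + (96)*a^2 + (865)*a^3 + (-1760)*a^4 + (-391)*a^5 + (2481)*a^6 + (-1500)*a^7 + (-493)*a^8 + (828)*a^9 + (-236)*a^10) ((180) + (-114)*a + (96)*a^2 + (865)*a^3 + (-1760)*a^4 + (-391)*a^5 + (2481)*a^6 + (-1500)*a^7 + (-493)*a^8 + (828)*a^9 + (-236)*a^10) = ((-11) + (16)*a + (-17)*a^2 + (-11)*a^3 + (97)*a^4 + (-69)*a^5 + (-39)*a^6 + (70)*a^7 + (-16)*a^8 + (-16)*a^9 + (7)*a^10) := by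
    rw [slope_of_Y_ne rfl hy2, div_eq_iff hd2]
    simp only [negY]
    rw [W31_a1, W31_a2, W31_a3, W31_a4]
    linear_combination ((-3786) + (7711)*a + (-13114)*a^2 + (2252)*a^3 + (35845)*a^4 + (-46560)*a^5 + (16114)*a^6 + (18525)*a^7 + (-28832)*a^8 + (13835)*a^9 + (11578)*a^10 + (-21311)*a^11 + (6536)*a^12 + (9200)*a^13 + (-8940)*a^14 + (1566)*a^15 + (1650)*a^16 + (-986)*a^17 + (168)*a^18) * hpoly
  have hX2 : (W31 K a).addX ((-5) + (7)*a + (-1)*a^2 + (-25)*a^3 + (56)*a^4 + (6)*a^5 + (-74)*a^6 + (50)*a^7 + (12)*a^8 + (-26)*a^9 + (8)*a^10) ((-5) + (7)*a + (-1)*a^2 + (-25)*a^3 + (56)*a^4 + (6)*a^5 + (-74)*a^6 + (50)*a^7 + (12)*a^8 + (-26)*a^9 + (8)*a^10) ((-11) + (16)*a + (-17)*a^2 + (-11)*a^3 + (97)*a^4 + (-69)*a^5 + (-39)*a^6 + (70)*a^7 + (-16)*a^8 + (-16)*a^9 + (7)*a^10) = ((18) + (-23)*a + (43)*a^2 + (32)*a^3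 + (-189)*a^4 + (106)*a^5 + (100)*a^6 + (-130)*a^7 + (16)*a^8 + (35)*a^9 + (-13)*a^10) := by
    simp only [addX]
    rw [W31_a1, W31_a2]
    linear_combination ((-116) + (303)*a + (-645)*a^2 + (816)*a^3 + (-95)*a^4 + (-646)*a^5 + (531)*a^6 + (-18)*a^7 + (-147)*a^8 + (49)*a^9) * hpoly
  have hXs2 : (W31 K a).addX ((-5) + (7)*a + (-1)*a^2 + (-25)*a^3 + (56)*a^4 + (6)*a^5 + (-74)*a^6 + (50)*a^7 + (12)*a^8 + (-26)*a^9 + (8)*a^10) ((-5) + (7)*a + (-1)*a^2 + (-25)*a^3 + (56)*a^4 + (6)*a^5 + (-74)*a^6 + (50)*a^7 + (12)*a^8 + (-26)*a^9 + (8)*a^10) ((W31 K a).slope ((-5) + (7)*a + (-1)*a^2 + (-25)*a^3 + (56)*a^4 + (6)*a^5 + (-74)*a^6 + (50)*a^7 + (12)*a^8 + (-26)*a^9 + (8)*a^10) ((-5) + (7)*a + (-1)*a^2 + (-25)*a^3 + (56)*a^4 + (6)*a^5 + (-74)*a^6 + (50)*a^7 + (12)*a^8 + (-26)*a^9 + (8)*a^10)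 ((180) + (-114)*a + (96)*a^2 + (865)*a^3 + (-1760)*a^4 + (-391)*a^5 + (2481)*a^6 + (-1500)*a^7 + (-493)*a^8 + (828)*a^9 + (-236)*a^10) ((180) + (-114)*a + (96)*a^2 + (865)*a^3 + (-1760)*a^4 + (-391)*a^5 + (2481)*a^6 + (-1500)*a^7 + (-493)*a^8 + (828)*a^9 + (-236)*a^10)) = ((18) + (-23)*a + (43)*a^2 + (32)*a^3 + (-189)*a^4 + (106)*a^5 + (100)*a^6 + (-130)*a^7 + (16)*a^8 + (35)*a^9 + (-13)*a^10) := by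
    rw [hL2]; exact hX2
  have hYs2 : (W31 K a).addY ((-5) + (7)*a + (-1)*a^2 + (-25)*a^3 + (56)*a^4 + (6)*a^5 + (-74)*a^6 + (50)*a^7 + (12)*a^8 + (-26)*a^9 + (8)*a^10) ((-5) + (7)*a + (-1)*a^2 + (-25)*a^3 + (56)*a^4 + (6)*a^5 + (-74)*a^6 + (50)*a^7 + (12)*a^8 + (-26)*a^9 + (8)*a^10) ((180) + (-114)*a + (96)*a^2 + (865)*a^3 + (-1760)*a^4 + (-391)*a^5 + (2481)*a^6 + (-1500)*a^7 + (-493)*a^8 + (828)*a^9 + (-236)*a^10) ((W31 K a).slope ((-5) + (7)*a + (-1)*a^2 + (-25)*a^3 + (56)*a^4 + (6)*a^5 + (-74)*a^6 + (50)*a^7 + (12)*a^8 + (-26)*a^9 + (8)*a^10) ((-5) + (7)*a + (-1)*a^2 + (-25)*a^3 + (56)*a^4 + (6)*a^5 + (-74)*a^6 + (50)*a^7 + (12)*a^8 + (-26)*a^9 + (8)*a^10) ((180) + (-114)*a + (96)*a^2 + (865)*a^3 + (-1760)*a^4 + (-391)*a^5 + (2481)*a^6 + (-1500)*a^7 + (-493)*a^8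 + (828)*a^9 + (-236)*a^10) ((180) + (-114)*a + (96)*a^2 + (865)*a^3 + (-1760)*a^4 + (-391)*a^5 + (2481)*a^6 + (-1500)*a^7 + (-493)*a^8 + (828)*a^9 + (-236)*a^10)) = ((35) + (-42)*a + (38)*a^2 + (131)*a^3 + (-328)*a^4 + (42)*a^5 + (318)*a^6 + (-244)*a^7 + (-33)*a^8 + (104)*a^9 + (-32)*a^10) := by
    simp only [addY, negAddY, negY, hL2, hX2]
    rw [W31_a1, W31_a3]
    linear_combination ((-34) + (481)*a + (-1300)*a^2 + (1414)*a^3 + (594)*a^4 + (-2084)*a^5 + (1231)*a^6 + (233)*a^7 + (-508)*a^8 + (147)*a^9) * hpoly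
  have hs2 : Point.some _ _ hns2 + Point.some _ _ hns2 = Point.some _ _ hns3 :=
    (WeierstrassCurve.Affine.Point.add_self_of_Y_ne (h₁ := hns2) hy2).trans
      (some_congr' hXs2 hYs2 _ hns3)
  -- doubling step 3
  have hy3 : ((35) + (-42)*a + (38)*a^2 + (131)*a^3 + (-328)*a^4 + (42)*a^5 + (318)*a^6 + (-244)*a^7 + (-33)*a^8 + (104)*a^9 + (-32)*a^10) ≠ (W31 K a).negY ((18) + (-23)*a + (43)*a^2 + (32)*a^3 + (-189)*a^4 + (106)*a^5 + (100)*a^6 + (-130)*a^7 + (16)*a^8 + (35)*a^9 + (-13)*a^10) ((35) + (-42)*a + (38)*a^2 + (131)*a^3 + (-328)*a^4 + (42)*a^5 + (318)*a^6 + (-244)*a^7 + (-33)*a^8 + (104)*a^9 + (-32)*a^10) := fun h => one_ne_zero (α := K) (by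
    simp only [negY, W31_a1, W31_a3] at h
    linear_combination ((839) + (-1169)*a + (1627)*a^2 + (1924)*a^3 + (-8545)*a^4 + (4347)*a^5 + (4822)*a^6 + (-5841)*a^7 + (617)*a^8 + (1627)*a^9 + (-597)*a^10) * h + ((62085) + (-208161)*a + (287386)*a^2 + (-252793)*a^3 + (-276624)*a^4 + (180872)*a^5 + (1258784)*a^6 + (-534658)*a^7 + (-3111158)*a^8 + (3785083)*a^9 + (708055)*a^10 + (-4001142)*a^11 + (2138505)*a^12 + (925513)*a^13 + (-1406548)*a^14 + (364910)*a^15 + (191206)*a^16 + (-133899)*a^17 + (23283)*a^18) * hpoly)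
  have hd3 : ((35) + (-42)*a + (38)*a^2 + (131)*a^3 + (-328)*a^4 + (42)*a^5 + (318)*a^6 + (-244)*a^7 + (-33)*a^8 + (104)*a^9 + (-32)*a^10) - (W31 K a).negY ((18) + (-23)*a + (43)*a^2 + (32)*a^3 + (-189)*a^4 + (106)*a^5 + (100)*a^6 + (-130)*a^7 + (16)*a^8 + (35)*a^9 + (-13)*a^10) ((35) + (-42)*a + (38)*a^2 + (131)*a^3 + (-328)*a^4 + (42)*a^5 + (318)*a^6 + (-244)*a^7 + (-33)*a^8 + (104)*a^9 + (-32)*a^10) ≠ 0 := fun h => one_ne_zero (α := K) (by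
    simp only [negY, W31_a1, W31_a3] at h
    linear_combination ((839) + (-1169)*a + (1627)*a^2 + (1924)*a^3 + (-8545)*a^4 + (4347)*a^5 + (4822)*a^6 + (-5841)*a^7 + (617)*a^8 + (1627)*a^9 + (-597)*a^10) * h + ((62085) + (-208161)*a + (287386)*a^2 + (-252793)*a^3 + (-276624)*a^4 + (180872)*a^5 + (1258784)*a^6 + (-534658)*a^7 + (-3111158)*a^8 + (3785083)*a^9 + (708055)*a^10 + (-4001142)*a^11 + (2138505)*a^12 + (925513)*a^13 + (-1406548)*a^14 + (364910)*a^15 + (191206)*a^16 + (-133899)*a^17 + (23283)*a^18) * hpoly)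
  have hL3 : (W31 K a).slope ((18) + (-23)*a + (43)*a^2 + (32)*a^3 + (-189)*a^4 + (106)*a^5 + (100)*a^6 + (-130)*a^7 + (16)*a^8 + (35)*a^9 + (-13)*a^10) ((18) + (-23)*a + (43)*a^2 + (32)*a^3 + (-189)*a^4 + (106)*a^5 + (100)*a^6 + (-130)*a^7 + (16)*a^8 + (35)*a^9 + (-13)*a^10) ((35) + (-42)*a + (38)*a^2 + (131)*a^3 + (-328)*a^4 + (42)*a^5 + (318)*a^6 + (-244)*a^7 + (-33)*a^8 + (104)*a^9 + (-32)*a^10) ((35) + (-42)*a + (38)*a^2 + (131)*a^3 + (-328)*a^4 + (42)*a^5 + (318)*a^6 + (-244)*a^7 + (-33)*a^8 + (104)*a^9 + (-32)*a^10) = ((18) + (-26)*a + (47)*a^2 + (42)*a^3 + (-209)*a^4 + (104)*a^5 + (123)*a^6 + (-144)*a^7 + (12)*a^8 + (42)*a^9 + (-15)*a^10) := by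
    rw [slope_of_Y_ne rfl hy3, div_eq_iff hd3]
    simp only [negY]
    rw [W31_a1, W31_a2, W31_a3, W31_a4]
    linear_combination ((899) + (-2734)*a + (2098)*a^2 + (521)*a^3 + (-10882)*a^4 + (2678)*a^5 + (36692)*a^6 + (-17475)*a^7 + (-75964)*a^8 + (93425)*a^9 + (18562)*a^10 + (-99203)*a^11 + (51305)*a^12 + (24612)*a^13 + (-35190)*a^14 + (8604)*a^15 + (5073)*a^16 + (-3408)*a^17 + (585)*a^18) * hpoly
  have hX3 : (W31 K a).addX ((18) + (-23)*a + (43)*a^2 + (32)*a^3 + (-189)*a^4 + (106)*a^5 + (100)*a^6 + (-130)*a^7 + (16)*a^8 + (35)*a^9 + (-13)*a^10) ((18) + (-23)*a + (43)*a^2 + (32)*a^3 + (-189)*a^4 + (106)*a^5 + (100)*a^6 + (-130)*a^7 + (16)*a^8 + (35)*a^9 + (-13)*a^10) ((18) + (-26)*a + (47)*a^2 + (42)*a^3 + (-209)*a^4 + (104)*a^5 + (123)*a^6 + (-144)*a^7 + (12)*a^8 + (42)*a^9 + (-15)*a^10) = ((9) + (-12)*a + (7)*a^2 + (45)*a^3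 + (-68)*a^4 + (-8)*a^5 + (71)*a^6 + (-41)*a^7 + (-12)*a^8 + (19)*a^9 + (-5)*a^10) := by
    simp only [addX]
    rw [W31_a1, W31_a2]
    linear_combination ((-311) + (938)*a + (-2218)*a^2 + (2535)*a^3 + (489)*a^4 + (-2952)*a^5 + (1857)*a^6 + (318)*a^7 + (-765)*a^8 + (225)*a^9) * hpoly
  have hXs3 : (W31 K a).addX ((18) + (-23)*a + (43)*a^2 + (32)*a^3 + (-189)*a^4 + (106)*a^5 + (100)*a^6 + (-130)*a^7 + (16)*a^8 + (35)*a^9 + (-13)*a^10) ((18) + (-23)*a + (43)*a^2 + (32)*a^3 + (-189)*a^4 + (106)*a^5 + (100)*a^6 + (-130)*a^7 + (16)*a^8 + (35)*a^9 + (-13)*a^10) ((W31 K a).slope ((18) + (-23)*a + (43)*a^2 + (32)*a^3 + (-189)*a^4 + (106)*a^5 + (100)*a^6 + (-130)*a^7 + (16)*a^8 + (35)*a^9 + (-13)*a^10) ((18) + (-23)*a + (43)*a^2 + (32)*a^3 + (-189)*a^4 + (106)*a^5 + (100)*a^6 + (-130)*a^7 + (16)*a^8 + (35)*a^9 + (-13)*a^10)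 ((35) + (-42)*a + (38)*a^2 + (131)*a^3 + (-328)*a^4 + (42)*a^5 + (318)*a^6 + (-244)*a^7 + (-33)*a^8 + (104)*a^9 + (-32)*a^10) ((35) + (-42)*a + (38)*a^2 + (131)*a^3 + (-328)*a^4 + (42)*a^5 + (318)*a^6 + (-244)*a^7 + (-33)*a^8 + (104)*a^9 + (-32)*a^10)) = ((9) + (-12)*a + (7)*a^2 + (45)*a^3 + (-68)*a^4 + (-8)*a^5 + (71)*a^6 + (-41)*a^7 + (-12)*a^8 + (19)*a^9 + (-5)*a^10) := by
    rw [hL3]; exact hX3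
  have hYs3 : (W31 K a).addY ((18) + (-23)*a + (43)*a^2 + (32)*a^3 + (-189)*a^4 + (106)*a^5 + (100)*a^6 + (-130)*a^7 + (16)*a^8 + (35)*a^9 + (-13)*a^10) ((18) + (-23)*a + (43)*a^2 + (32)*a^3 + (-189)*a^4 + (106)*a^5 + (100)*a^6 + (-130)*a^7 + (16)*a^8 + (35)*a^9 + (-13)*a^10) ((35) + (-42)*a + (38)*a^2 + (131)*a^3 + (-328)*a^4 + (42)*a^5 + (318)*a^6 + (-244)*a^7 + (-33)*a^8 + (104)*a^9 + (-32)*a^10) ((W31 K a).slope ((18) + (-23)*a + (43)*a^2 + (32)*a^3 + (-189)*a^4 + (106)*a^5 + (100)*a^6 + (-130)*a^7 + (16)*a^8 + (35)*a^9 + (-13)*a^10) ((18) + (-23)*a + (43)*a^2 + (32)*a^3 + (-189)*a^4 + (106)*a^5 + (100)*a^6 + (-130)*a^7 + (16)*a^8 + (35)*a^9 + (-13)*a^10) ((35) + (-42)*a + (38)*a^2 + (131)*a^3 + (-328)*a^4 + (42)*a^5 + (318)*a^6 + (-244)*a^7 + (-33)*a^8 + (104)*a^9 + (-32)*a^10)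 ((35) + (-42)*a + (38)*a^2 + (131)*a^3 + (-328)*a^4 + (42)*a^5 + (318)*a^6 + (-244)*a^7 + (-33)*a^8 + (104)*a^9 + (-32)*a^10)) = ((27) + (-5)*a + (34)*a^2 + (161)*a^3 + (-206)*a^4 + (-116)*a^5 + (312)*a^6 + (-126)*a^7 + (-87)*a^8 + (83)*a^9 + (-18)*a^10) := by
    simp only [addY, negAddY, negY, hL3, hX3]
    rw [W31_a1, W31_a3]
    linear_combination ((-105) + (353)*a + (-1341)*a^2 + (2116)*a^3 + (-446)*a^4 + (-1554)*a^5 + (1380)*a^6 + (-94)*a^7 + (-351)*a^8 + (120)*a^9) * hpoly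
  have hs3 : Point.some _ _ hns3 + Point.some _ _ hns3 = Point.some _ _ hns4 :=
    (WeierstrassCurve.Affine.Point.add_self_of_Y_ne (h₁ := hns3) hy3).trans
      (some_congr' hXs3 hYs3 _ hns4)
  -- doubling step 4
  have hy4 : ((27) + (-5)*a + (34)*a^2 + (161)*a^3 + (-206)*a^4 + (-116)*a^5 + (312)*a^6 + (-126)*a^7 + (-87)*a^8 + (83)*a^9 + (-18)*a^10) ≠ (W31 K a).negY ((9) + (-12)*a + (7)*a^2 + (45)*a^3 + (-68)*a^4 + (-8)*a^5 + (71)*a^6 + (-41)*a^7 + (-12)*a^8 + (19)*a^9 + (-5)*a^10) ((27) + (-5)*a + (34)*a^2 + (161)*a^3 + (-206)*a^4 + (-116)*a^5 + (312)*a^6 + (-126)*a^7 + (-87)*a^8 + (83)*a^9 + (-18)*a^10) := fun h => one_ne_zero (α := K) (by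
    simp only [negY, W31_a1, W31_a3] at h
    linear_combination ((724) + (-1008)*a + (1417)*a^2 + (1657)*a^3 + (-7365)*a^4 + (3798)*a^5 + (4083)*a^6 + (-5117)*a^7 + (605)*a^8 + (1429)*a^9 + (-535)*a^10) * h + ((35475) + (-79800)*a + (120457)*a^2 + (58096)*a^3 + (-308706)*a^4 + (-7586)*a^5 + (417628)*a^6 + (326613)*a^7 + (-1330130)*a^8 + (576906)*a^9 + (1185340)*a^10 + (-1457582)*a^11 + (163179)*a^12 + (724286)*a^13 + (-496134)*a^14 + (15115)*a^15 + (119648)*a^16 + (-54605)*a^17 + (8025)*a^18) * hpoly)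
  have hd4 : ((27) + (-5)*a + (34)*a^2 + (161)*a^3 + (-206)*a^4 + (-116)*a^5 + (312)*a^6 + (-126)*a^7 + (-87)*a^8 + (83)*a^9 + (-18)*a^10) - (W31 K a).negY ((9) + (-12)*a + (7)*a^2 + (45)*a^3 + (-68)*a^4 + (-8)*a^5 + (71)*a^6 + (-41)*a^7 + (-12)*a^8 + (19)*a^9 + (-5)*a^10) ((27) + (-5)*a + (34)*a^2 + (161)*a^3 + (-206)*a^4 + (-116)*a^5 + (312)*a^6 + (-126)*a^7 + (-87)*a^8 + (83)*a^9 + (-18)*a^10) ≠ 0 := fun h => one_ne_zero (α := K) (by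
    simp only [negY, W31_a1, W31_a3] at h
    linear_combination ((724) + (-1008)*a + (1417)*a^2 + (1657)*a^3 + (-7365)*a^4 + (3798)*a^5 + (4083)*a^6 + (-5117)*a^7 + (605)*a^8 + (1429)*a^9 + (-535)*a^10) * h + ((35475) + (-79800)*a + (120457)*a^2 + (58096)*a^3 + (-308706)*a^4 + (-7586)*a^5 + (417628)*a^6 + (326613)*a^7 + (-1330130)*a^8 + (576906)*a^9 + (1185340)*a^10 + (-1457582)*a^11 + (163179)*a^12 + (724286)*a^13 + (-496134)*a^14 + (15115)*a^15 + (119648)*a^16 + (-54605)*a^17 + (8025)*a^18) * hpoly)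
  have hL4 : (W31 K a).slope ((9) + (-12)*a + (7)*a^2 + (45)*a^3 + (-68)*a^4 + (-8)*a^5 + (71)*a^6 + (-41)*a^7 + (-12)*a^8 + (19)*a^9 + (-5)*a^10) ((9) + (-12)*a + (7)*a^2 + (45)*a^3 + (-68)*a^4 + (-8)*a^5 + (71)*a^6 + (-41)*a^7 + (-12)*a^8 + (19)*a^9 + (-5)*a^10) ((27) + (-5)*a + (34)*a^2 + (161)*a^3 + (-206)*a^4 + (-116)*a^5 + (312)*a^6 + (-126)*a^7 + (-87)*a^8 + (83)*a^9 + (-18)*a^10) ((27) + (-5)*a + (34)*a^2 + (161)*a^3 + (-206)*a^4 + (-116)*a^5 + (312)*a^6 + (-126)*a^7 + (-87)*a^8 + (83)*a^9 + (-18)*a^10) = ((12) + (-15)*a + (19)*a^2 + (35)*a^3 + (-101)*a^4 + (39)*a^5 + (62)*a^6 + (-63)*a^7 + (3)*a^8 + (18)*a^9 + (-6)*a^10) := by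
    rw [slope_of_Y_ne rfl hy4, div_eq_iff hd4]
    simp only [negY]
    rw [W31_a1, W31_a2, W31_a3, W31_a4]
    linear_combination ((624) + (-950)*a + (952)*a^2 + (1509)*a^3 + (-3715)*a^4 + (-1541)*a^5 + (5295)*a^6 + (6696)*a^7 + (-18258)*a^8 + (4985)*a^9 + (17780)*a^10 + (-18250)*a^11 + (327)*a^12 + (9847)*a^13 + (-5901)*a^14 + (-129)*a^15 + (1521)*a^16 + (-642)*a^17 + (90)*a^18) * hpoly
  have hX4 : (W31 K a).addX ((9) + (-12)*a + (7)*a^2 + (45)*a^3 + (-68)*a^4 + (-8)*a^5 + (71)*a^6 + (-41)*a^7 + (-12)*a^8 + (19)*a^9 + (-5)*a^10) ((9) + (-12)*a + (7)*a^2 + (45)*a^3 + (-68)*a^4 + (-8)*a^5 + (71)*a^6 + (-41)*a^7 + (-12)*a^8 + (19)*a^9 + (-5)*a^10) ((12) + (-15)*a + (19)*a^2 + (35)*a^3 + (-101)*a^4 + (39)*a^5 + (62)*a^6 + (-63)*a^7 + (3)*a^8 + (18)*a^9 + (-6)*a^10) = (0 : K) := by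
    simp only [addX]
    rw [W31_a1, W31_a2]
    linear_combination ((-152) + (373)*a + (-614)*a^2 + (509)*a^3 + (165)*a^4 + (-603)*a^5 + (357)*a^6 + (48)*a^7 + (-126)*a^8 + (36)*a^9) * hpoly
  have hXs4 : (W31 K a).addX ((9) + (-12)*a + (7)*a^2 + (45)*a^3 + (-68)*a^4 + (-8)*a^5 + (71)*a^6 + (-41)*a^7 + (-12)*a^8 + (19)*a^9 + (-5)*a^10) ((9) + (-12)*a + (7)*a^2 + (45)*a^3 + (-68)*a^4 + (-8)*a^5 + (71)*a^6 + (-41)*a^7 + (-12)*a^8 + (19)*a^9 + (-5)*a^10) ((W31 K a).slope ((9) + (-12)*a + (7)*a^2 + (45)*a^3 + (-68)*a^4 + (-8)*a^5 + (71)*a^6 + (-41)*a^7 + (-12)*a^8 + (19)*a^9 + (-5)*a^10) ((9) + (-12)*a + (7)*a^2 + (45)*a^3 + (-68)*a^4 + (-8)*a^5 + (71)*a^6 + (-41)*a^7 + (-12)*a^8 + (19)*a^9 + (-5)*a^10) ((27) + (-5)*a + (34)*a^2 + (161)*a^3 + (-206)*a^4 + (-116)*a^5 + (312)*a^6 + (-126)*a^7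 + (-87)*a^8 + (83)*a^9 + (-18)*a^10) ((27) + (-5)*a + (34)*a^2 + (161)*a^3 + (-206)*a^4 + (-116)*a^5 + (312)*a^6 + (-126)*a^7 + (-87)*a^8 + (83)*a^9 + (-18)*a^10)) = (0 : K) := by
    rw [hL4]; exact hX4
  have hYs4 : (W31 K a).addY ((9) + (-12)*a + (7)*a^2 + (45)*a^3 + (-68)*a^4 + (-8)*a^5 + (71)*a^6 + (-41)*a^7 + (-12)*a^8 + (19)*a^9 + (-5)*a^10) ((9) + (-12)*a + (7)*a^2 + (45)*a^3 + (-68)*a^4 + (-8)*a^5 + (71)*a^6 + (-41)*a^7 + (-12)*a^8 + (19)*a^9 + (-5)*a^10) ((27) + (-5)*a + (34)*a^2 + (161)*a^3 + (-206)*a^4 + (-116)*a^5 + (312)*a^6 + (-126)*a^7 + (-87)*a^8 + (83)*a^9 + (-18)*a^10) ((W31 K a).slope ((9) + (-12)*a + (7)*a^2 + (45)*a^3 + (-68)*a^4 + (-8)*a^5 + (71)*a^6 + (-41)*a^7 + (-12)*a^8 + (19)*a^9 + (-5)*a^10) ((9) + (-12)*a + (7)*a^2 + (45)*a^3 + (-68)*a^4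 + (-8)*a^5 + (71)*a^6 + (-41)*a^7 + (-12)*a^8 + (19)*a^9 + (-5)*a^10) ((27) + (-5)*a + (34)*a^2 + (161)*a^3 + (-206)*a^4 + (-116)*a^5 + (312)*a^6 + (-126)*a^7 + (-87)*a^8 + (83)*a^9 + (-18)*a^10) ((27) + (-5)*a + (34)*a^2 + (161)*a^3 + (-206)*a^4 + (-116)*a^5 + (312)*a^6 + (-126)*a^7 + (-87)*a^8 + (83)*a^9 + (-18)*a^10)) = (0 : K) := by
    simp only [addY, negAddY, negY, hL4, hX4]
    rw [W31_a1, W31_a3]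
    linear_combination ((-95) + (272)*a + (-407)*a^2 + (55)*a^3 + (537)*a^4 + (-574)*a^5 + (102)*a^6 + (201)*a^7 + (-144)*a^8 + (30)*a^9) * hpoly
  have hs4 : Point.some _ _ hns4 + Point.some _ _ hns4 = Point.some _ _ hns0 :=
    (WeierstrassCurve.Affine.Point.add_self_of_Y_ne (h₁ := hns4) hy4).trans
      (some_congr' hXs4 hYs4 _ hns0)
  refine ⟨hns0, ?_⟩
  have e0 : (2:ℕ) • Point.some _ _ hns0 = Point.some _ _ hns1 := by rw [two_nsmul, hs0]
  have e1 : (2:ℕ) • Point.some _ _ hns1 = Point.some _ _ hns2 := by rw [two_nsmul, hs1]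
  have e2 : (2:ℕ) • Point.some _ _ hns2 = Point.some _ _ hns3 := by rw [two_nsmul, hs2]
  have e3 : (2:ℕ) • Point.some _ _ hns3 = Point.some _ _ hns4 := by rw [two_nsmul, hs3]
  have e4 : (2:ℕ) • Point.some _ _ hns4 = Point.some _ _ hns0 := by rw [two_nsmul, hs4]
  have E : ((2*(2*(2*(2*2)))) : ℕ) • Point.some _ _ hns0 = Point.some _ _ hns0 := by
    rw [mul_smul, mul_smul, mul_smul, mul_smul, e0, e1, e2, e3, e4]
  have E32 : (32:ℕ) • Point.some _ _ hns0 = Point.some _ _ hns0 := by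
    norm_num at E
    exact E
  have h32 : (31:ℕ) • Point.some _ _ hns0 + Point.some _ _ hns0 = Point.some _ _ hns0 := by
    rw [← succ_nsmul]
    exact E32
  have h31 : (31:ℕ) • Point.some _ _ hns0 = 0 :=
    add_right_cancel (h32.trans (zero_add (Point.some _ _ hns0)).symm)
  haveI : Fact (Nat.Prime 31) := ⟨by norm_num⟩
  exact addOrderOf_eq_prime h31 (Point.some_ne_zero hns0)

open Classical in
/-- The Tate normal form curve E_{b,c} over K = ℚ(a), where a is a root of the stated
polynomial, has the point (0,0) of order exactly 31. -/
theorem stmt_14 (K : Type) [Field K] [CharZero K] (a b c : K)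
    (hpoly : a^11 - 2*a^10 - 3*a^9 + 9*a^8 - a^7 - 13*a^6 + 9*a^5 + 7*a^4 - 5*a^3 - 1 = 0)
    (hgen : IntermediateField.adjoin ℚ {a} = ⊤)
    (hb : b = -9*a^10 + 38*a^9 - 35*a^8 - 59*a^7 + 131*a^6 - 45*a^5 - 81*a^4 + 59*a^3 + 6*a^2 + 2*a + 14)
    (hc : c = 3*a^9 - 7*a^8 - 3*a^7 + 18*a^6 - 9*a^5 - 13*a^4 + 10*a^3 + 9*a^2 + 2*a) :
    ∃ h : ({ a₁ := 1 - c, a₂ := -b, a₃ := -b, a₄ := 0, a₆ := 0 } :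
        WeierstrassCurve K).toAffine.Nonsingular 0 0,
      addOrderOf (WeierstrassCurve.Affine.Point.some _ _ h) = 31 := by
  subst hb; subst hc
  exact aux31 K a hpoly
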